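/- Let M be a meet-tree and σ an automorphism of M. If B ⊆ M is a chain with σ(B) = B, x ∈ B, and y < x, then B ∪ {σ^n(y) : n ∈ ℤ} is still a chain. -/

import Mathlib

/-!
Every `σ ^ n` is an order automorphism mapping `B` onto itself, so `σ ^ n y ≤ σ ^ n x ∈ B`: the
whole orbit of `y` lies in the lower closure of `B`. In a meet-tree the lower closure of a chain
is again a chain, since two elements below `b₁ ≤ b₂` both lie in the chain of predecessors of `b₂`.
-/

open Pointwise

theorem IsChain.lowerClosure {M : Type*} [Preorder M]
    (htree : ∀ a : M, IsChain (· ≤ ·) {x : M | x ≤ a}) {B : Set M}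
    (hB : IsChain (· ≤ ·) B) : IsChain (· ≤ ·) (lowerClosure B : Set M) := by
  rintro a ⟨b₁, hb₁, hab₁⟩ c ⟨b₂, hb₂, hcb₂⟩ hac
  rcases hB.total hb₁ hb₂ with h | h
  · exact htree b₂ (hab₁.trans h) hcb₂ hac
  · exact htree b₁ hab₁ (hcb₂.trans h) hac

def Equiv.Perm.orderAutSubgroup (M : Type*) [LE M] : Subgroup (Equiv.Perm M) where
  carrier := {τ | ∀ a b : M, a ≤ b ↔ τ a ≤ τ b}
  mul_mem' hσ hτ a b := (hτ a b).trans (hσ _ _)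
  one_mem' _ _ := Iff.rfl
  inv_mem' {τ} hτ a b := by simpa using (hτ (τ⁻¹ a) (τ⁻¹ b)).symm

theorem Equiv.Perm.zpow_le_zpow_iff {M : Type*} [LE M] {σ : Equiv.Perm M}
    (hmono : ∀ a b : M, a ≤ b ↔ σ a ≤ σ b) (n : ℤ) (a b : M) :
    a ≤ b ↔ (σ ^ n) a ≤ (σ ^ n) b :=
  (Equiv.Perm.orderAutSubgroup M).zpow_mem (x := σ) hmono n a b

theorem Equiv.Perm.zpow_apply_mem_of_image_eq {α : Type*} {σ : Equiv.Perm α} {B : Set α}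
    (hBinv : σ '' B = B) (n : ℤ) {x : α} (hx : x ∈ B) : (σ ^ n) x ∈ B := by
  have hσ : σ ∈ MulAction.stabilizer (Equiv.Perm α) B := hBinv
  have hσn : (σ ^ n) • B = B := (MulAction.stabilizer (Equiv.Perm α) B).zpow_mem hσ n
  exact hσn ▸ Set.smul_mem_smul_set hx

theorem stmt_7_general {M : Type*} [SemilatticeInf M]
    (htree : ∀ a : M, IsChain (· ≤ ·) {x : M | x ≤ a})
    (σ : Equiv.Perm M) (hmono : ∀ a b : M, a ≤ b ↔ σ a ≤ σ b)
    (B : Set M) (hB : IsChain (· ≤ ·) B) (hBinv : σ '' B = B)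
    (x : M) (hx : x ∈ B) (y : M) (hy : y < x) :
    IsChain (· ≤ ·) (B ∪ {z : M | ∃ n : ℤ, (σ ^ n) y = z}) := by
  refine (hB.lowerClosure htree).mono (Set.union_subset subset_lowerClosure ?_)
  rintro _ ⟨n, rfl⟩
  exact ⟨(σ ^ n) x, Equiv.Perm.zpow_apply_mem_of_image_eq hBinv n hx,
    (Equiv.Perm.zpow_le_zpow_iff hmono n y x).mp hy.le⟩

/-- In a meet-tree, if `B` is a chain invariant under an automorphism `σ`, `x ∈ B` and
`y < x`, then adding the whole `σ`-orbit of `y` to `B` still yields a chain. -/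
theorem stmt_7 {M : Type*} [SemilatticeInf M]
    (htree : ∀ a : M, IsChain (· ≤ ·) {x : M | x ≤ a})
    (σ : Equiv.Perm M) (hmono : ∀ a b : M, a ≤ b ↔ σ a ≤ σ b)
    (hinf : ∀ a b : M, σ (a ⊓ b) = σ a ⊓ σ b)
    (B : Set M) (hB : IsChain (· ≤ ·) B) (hBinv : σ '' B = B)
    (x : M) (hx : x ∈ B) (y : M) (hy : y < x) :
    IsChain (· ≤ ·) (B ∪ {z : M | ∃ n : ℤ, (σ ^ n) y = z}) :=
  stmt_7_general htree σ hmono B hB hBinv x hx y hy
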